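/- Let 0 → A → E → B → 0 be an abelian extension of perm algebras (so the multiplication of A is trivial), with induced B-bimodule structure (⊳, ⊲) on A and corresponding 2-cocycle χ. A pair (β, γ) ∈ Aut_{⊳,⊲}(A,B) of compatible automorphisms is induced by some automorphism of E preserving A if and only if there exists a linear map λ : B → A such that β(χ(b1,b2)) = χ(γ(b1), γ(b2)) − γ(b1)⊳λ(γ(b2)) + λ(γ(b1)γ(b2)) − λ(γ(b1))⊲γ(b2) for all b1, b2 ∈ B. -/

import Mathlib

/-- The multiplication of the abelian extension `E = A ⋊_χ B`
(the `B`-bimodule `A` has trivial multiplication):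
`(a₁,b₁)(a₂,b₂) = (b₁⊳a₂ + a₁⊲b₂ + χ(b₁,b₂), b₁b₂)`. -/
def abelianExtMul {k A B : Type*} [Field k] [AddCommGroup A] [Module k A]
    [AddCommGroup B] [Module k B]
    (mulB : B →ₗ[k] B →ₗ[k] B)
    (tri : B →ₗ[k] A →ₗ[k] A) (tir : A →ₗ[k] B →ₗ[k] A) (χ : B →ₗ[k] B →ₗ[k] A) :
    A × B → A × B → A × B :=
  fun p q => (tri p.2 q.1 + tir p.1 q.2 + χ p.2 q.2, mulB p.2 q.2)

/-!
An automorphism `α` of `E = A × B` with `α (a, 0) = (β a, 0)` and `(α (0, b)).2 = γ b` is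
determined by its defect `φ b := (α (0, b)).1`, being `(a, b) ↦ (β a + φ b, γ b)`.  Since `β` and
`γ` are compatible with the actions, multiplicativity of such a map only has to be checked on
`(0, b₁) (0, b₂) = (χ b₁ b₂, b₁ b₂)`, where it says `β (χ b₁ b₂) + φ (b₁ b₂)
= γ b₁ ⊳ φ b₂ + φ b₁ ⊲ γ b₂ + χ (γ b₁) (γ b₂)`.  Putting `λ := -φ ∘ γ⁻¹` turns this into
the stated equation.
-/

namespace AbelianExtension

section Shear

variable {k A B : Type*} [Ring k] [AddCommGroup A] [Module k A] [AddCommGroup B] [Module k B]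

def shear (β : A ≃ₗ[k] A) (γ : B ≃ₗ[k] B) (φ : B →ₗ[k] A) : (A × B) ≃ₗ[k] (A × B) :=
  { (β.toLinearMap ∘ₗ LinearMap.fst k A B + φ ∘ₗ LinearMap.snd k A B).prod
      (γ.toLinearMap ∘ₗ LinearMap.snd k A B) with
    invFun := fun p => (β.symm (p.1 - φ (γ.symm p.2)), γ.symm p.2)
    left_inv := fun p => by simp
    right_inv := fun p => by simp }

variable (β : A ≃ₗ[k] A) (γ : B ≃ₗ[k] B) (φ : B →ₗ[k] A)

@[simp]
theorem shear_apply (x : A × B) : shear β γ φ x = (β x.1 + φ x.2, γ x.2) := rfl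

theorem eq_shear_of_restrict {α : (A × B) ≃ₗ[k] (A × B)} (hA : ∀ a, α (a, 0) = (β a, 0))
    (hB : ∀ b, (α (0, b)).2 = γ b) :
    α = shear β γ (LinearMap.fst k A B ∘ₗ α.toLinearMap ∘ₗ LinearMap.inr k A B) := by
  ext1 ⟨a, b⟩
  have hab : ((a, b) : A × B) = (a, 0) + (0, b) := by simp
  rw [hab, map_add, hA, Prod.ext_iff]
  simp [hB]

end Shear

variable {k A B : Type*} [Field k] [AddCommGroup A] [Module k A] [AddCommGroup B] [Module k B]
  {mulB : B →ₗ[k] B →ₗ[k] B} {tri : B →ₗ[k] A →ₗ[k] A} {tir : A →ₗ[k] B →ₗ[k] A}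
  {χ : B →ₗ[k] B →ₗ[k] A} {β : A ≃ₗ[k] A} {γ : B ≃ₗ[k] B}

theorem shear_map_mul_iff (φ : B →ₗ[k] A) (hγ : ∀ b1 b2, γ (mulB b1 b2) = mulB (γ b1) (γ b2))
    (hβ1 : ∀ b a, β (tri b a) = tri (γ b) (β a)) (hβ2 : ∀ a b, β (tir a b) = tir (β a) (γ b)) :
    (∀ x y, shear β γ φ (abelianExtMul mulB tri tir χ x y) =
      abelianExtMul mulB tri tir χ (shear β γ φ x) (shear β γ φ y)) ↔
    ∀ b1 b2, β (χ b1 b2) + φ (mulB b1 b2) =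
      tri (γ b1) (φ b2) + tir (φ b1) (γ b2) + χ (γ b1) (γ b2) := by
  constructor
  · intro hmul b1 b2
    simpa [abelianExtMul] using congrArg Prod.fst (hmul (0, b1) (0, b2))
  · rintro hφ ⟨a1, b1⟩ ⟨a2, b2⟩
    simp only [abelianExtMul, shear_apply, map_add, LinearMap.add_apply, hβ1, hβ2, hγ,
      Prod.mk.injEq, and_true]
    rw [add_assoc _ (β (χ b1 b2)), hφ]
    abel

theorem inducible_iff_exists_shear (hγ : ∀ b1 b2, γ (mulB b1 b2) = mulB (γ b1) (γ b2))
    (hβ1 : ∀ b a, β (tri b a) = tri (γ b) (β a)) (hβ2 : ∀ a b, β (tir a b) = tir (β a) (γ b)) :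
    (∃ α : (A × B) ≃ₗ[k] (A × B),
      (∀ x y, α (abelianExtMul mulB tri tir χ x y) =
        abelianExtMul mulB tri tir χ (α x) (α y)) ∧
      (∀ a, α (a, 0) = (β a, 0)) ∧ (∀ b, (α (0, b)).2 = γ b)) ↔
    ∃ φ : B →ₗ[k] A, ∀ b1 b2, β (χ b1 b2) + φ (mulB b1 b2) =
      tri (γ b1) (φ b2) + tir (φ b1) (γ b2) + χ (γ b1) (γ b2) := by
  constructor
  · rintro ⟨α, hmul, hA, hB⟩
    rw [eq_shear_of_restrict β γ hA hB, shear_map_mul_iff _ hγ hβ1 hβ2] at hmul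
    exact ⟨_, hmul⟩
  · rintro ⟨φ, hφ⟩
    exact ⟨shear β γ φ, (shear_map_mul_iff φ hγ hβ1 hβ2).2 hφ, by simp, by simp⟩

end AbelianExtension

open AbelianExtension in
theorem inducible_iff_wells_general {k A B : Type*} [Field k] [AddCommGroup A] [Module k A]
    [AddCommGroup B] [Module k B]
    (mulB : B →ₗ[k] B →ₗ[k] B)
    (tri : B →ₗ[k] A →ₗ[k] A) (tir : A →ₗ[k] B →ₗ[k] A) (χ : B →ₗ[k] B →ₗ[k] A)
    (β : A ≃ₗ[k] A) (γ : B ≃ₗ[k] B)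
    (hγ : ∀ b1 b2 : B, γ (mulB b1 b2) = mulB (γ b1) (γ b2))
    (hβ1 : ∀ (b : B) (a : A), β (tri b a) = tri (γ b) (β a))
    (hβ2 : ∀ (a : A) (b : B), β (tir a b) = tir (β a) (γ b)) :
    -- (β, γ) is inducible
    (∃ α : (A × B) ≃ₗ[k] (A × B),
      (∀ x y : A × B, α (abelianExtMul mulB tri tir χ x y) =
        abelianExtMul mulB tri tir χ (α x) (α y)) ∧
      (∀ a : A, α (a, 0) = (β a, 0)) ∧
      (∀ b : B, (α (0, b)).2 = γ b))
    ↔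
    (∃ lam : B →ₗ[k] A, ∀ b1 b2 : B,
      β (χ b1 b2) =
        χ (γ b1) (γ b2) - tri (γ b1) (lam (γ b2)) + lam (mulB (γ b1) (γ b2)) -
          tir (lam (γ b1)) (γ b2)) := by
  rw [inducible_iff_exists_shear hγ hβ1 hβ2]
  constructor
  · rintro ⟨φ, hφ⟩
    refine ⟨-(φ ∘ₗ γ.symm.toLinearMap), fun b1 b2 => ?_⟩
    simp only [← hγ, LinearMap.neg_apply, LinearMap.comp_apply, LinearEquiv.coe_coe,
      LinearEquiv.symm_apply_apply, map_neg]
    rw [eq_sub_of_add_eq (hφ b1 b2)]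
    abel
  · rintro ⟨lam, hlam⟩
    refine ⟨-(lam ∘ₗ γ.toLinearMap), fun b1 b2 => ?_⟩
    simp only [LinearMap.neg_apply, LinearMap.comp_apply, LinearEquiv.coe_coe, hγ, map_neg,
      hlam b1 b2]
    abel

/-- Let `E = A ⋊_χ B` be an abelian extension of a perm algebra `B` by a `B`-bimodule
`(A, ⊳, ⊲)` with 2-cocycle `χ`.  A pair `(β, γ)` of compatible automorphisms is induced by
an automorphism of `E` preserving `A` if and only if there is a linear map `λ : B → A` with
`β(χ(b₁,b₂)) = χ(γ(b₁),γ(b₂)) − γ(b₁)⊳λ(γ(b₂)) + λ(γ(b₁)γ(b₂)) − λ(γ(b₁))⊲γ(b₂)`. -/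
theorem inducible_iff_wells {k A B : Type*} [Field k] [AddCommGroup A] [Module k A]
    [AddCommGroup B] [Module k B]
    (mulB : B →ₗ[k] B →ₗ[k] B)
    (hpB1 : ∀ x y z, mulB (mulB x y) z = mulB x (mulB y z))
    (hpB2 : ∀ x y z, mulB x (mulB y z) = mulB x (mulB z y))
    (tri : B →ₗ[k] A →ₗ[k] A) (tir : A →ₗ[k] B →ₗ[k] A) (χ : B →ₗ[k] B →ₗ[k] A)
    -- E = A ⋊_χ B is a perm algebra (this encodes the bimodule and cocycle conditions)
    (hperm : ∀ x y z : A × B,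
      abelianExtMul mulB tri tir χ (abelianExtMul mulB tri tir χ x y) z =
        abelianExtMul mulB tri tir χ x (abelianExtMul mulB tri tir χ y z) ∧
      abelianExtMul mulB tri tir χ x (abelianExtMul mulB tri tir χ y z) =
        abelianExtMul mulB tri tir χ x (abelianExtMul mulB tri tir χ z y))
    (β : A ≃ₗ[k] A) (γ : B ≃ₗ[k] B)
    (hγ : ∀ b1 b2 : B, γ (mulB b1 b2) = mulB (γ b1) (γ b2))
    (hβ1 : ∀ (b : B) (a : A), β (tri b a) = tri (γ b) (β a))
    (hβ2 : ∀ (a : A) (b : B), β (tir a b) = tir (β a) (γ b)) :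
    -- (β, γ) is inducible
    (∃ α : (A × B) ≃ₗ[k] (A × B),
      (∀ x y : A × B, α (abelianExtMul mulB tri tir χ x y) =
        abelianExtMul mulB tri tir χ (α x) (α y)) ∧
      (∀ a : A, α (a, 0) = (β a, 0)) ∧
      (∀ b : B, (α (0, b)).2 = γ b))
    ↔
    (∃ lam : B →ₗ[k] A, ∀ b1 b2 : B,
      β (χ b1 b2) =
        χ (γ b1) (γ b2) - tri (γ b1) (lam (γ b2)) + lam (mulB (γ b1) (γ b2)) -
          tir (lam (γ b1)) (γ b2)) :=
  inducible_iff_wells_general mulB tri tir χ β γ hγ hβ1 hβ2
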